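/- arXiv:2107.00335 — 3 statements merged into one kernel-verified Lean document; each statement's English description precedes it below -/
import Mathlib

section
/- Under the stated hypotheses, the period satisfies L ≥ 100, i.e. the closed curve γ₀ has length at least 100. -/
/-!
If `L < 100`, every tangent `T s` with `s ∈ [0, L]` lies within `100 ε < 1/100` of `T 0`, by
chaining the hypothesis over a hundred steps of length at most `1`. Then `⟪T 0, T s⟫ ≥ 1/2` on
`[0, L]`, so `s ↦ ⟪T 0, γ₀ s⟫` increases by at least `L / 2 > 0` over one period, contradicting
`γ₀ L = γ₀ 0`.
-/

open MeasureTheory Set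

noncomputable section

abbrev E3 := EuclideanSpace ℝ (Fin 3)

open scoped RealInnerProductSpace

theorem dist_le_nat_mul_of_dist_le {α : Type*} [PseudoMetricSpace α] {f : ℝ → α} {δ ε : ℝ}
    (h : ∀ s t, |s - t| ≤ δ → dist (f s) (f t) ≤ ε) (n : ℕ) {s t : ℝ}
    (hst : |s - t| ≤ n * δ) : dist (f s) (f t) ≤ n * ε := by
  induction n generalizing s with
  | zero =>
    obtain rfl : s = t := sub_eq_zero.mp (abs_nonpos_iff.mp (by simpa using hst))
    simp
  | succ n ih =>
    have hn : (0 : ℝ) < n + 1 := by positivity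
    have hstep : |s - t| / (n + 1) ≤ δ := by
      rw [div_le_iff₀ hn]; push_cast at hst; linarith
    set u := s - (s - t) / (n + 1) with hu
    have hsu : |s - u| ≤ δ := by
      rwa [hu, sub_sub_cancel, abs_div, abs_of_pos hn]
    have hut : |u - t| ≤ n * δ := by
      rw [hu, show s - (s - t) / (n + 1) - t = n * ((s - t) / (n + 1)) by field_simp; ring,
        abs_mul, Nat.abs_cast, abs_div, abs_of_pos hn]
      gcongr
    calc dist (f s) (f t) ≤ dist (f s) (f u) + dist (f u) (f t) := dist_triangle _ _ _
      _ ≤ ε + n * ε := add_le_add (h s u hsu) (ih hut)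
      _ = (n + 1 : ℕ) * ε := by push_cast; ring

theorem sq_norm_sub_norm_mul_norm_sub_le_real_inner {F : Type*} [NormedAddCommGroup F]
    [InnerProductSpace ℝ F] (u v : F) : ‖u‖ ^ 2 - ‖u‖ * ‖v - u‖ ≤ ⟪u, v⟫ := by
  have hdecomp : ⟪u, v⟫ = ‖u‖ ^ 2 + ⟪u, v - u⟫ := by
    rw [inner_sub_right, real_inner_self_eq_norm_sq]; ring
  linarith [neg_le_of_abs_le (abs_real_inner_le_norm u (v - u))]

theorem mul_sub_le_real_inner_sub_of_le_real_inner {F : Type*} [NormedAddCommGroup F]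
    [InnerProductSpace ℝ F] {γ T : ℝ → F} (u : F) {a b c : ℝ} (hab : a ≤ b)
    (hγ : ∀ s ∈ Icc a b, HasDerivAt γ (T s) s) (hc : ∀ s ∈ Icc a b, c ≤ ⟪u, T s⟫) :
    c * (b - a) ≤ ⟪u, γ b - γ a⟫ := by
  have hφ : ∀ s ∈ Icc a b, HasDerivAt (fun s ↦ ⟪u, γ s⟫) ⟪u, T s⟫ s := fun s hs ↦
    (innerSL ℝ u).hasFDerivAt.comp_hasDerivAt s (hγ s hs)
  rw [inner_sub_right]
  refine (convex_Icc a b).mul_sub_le_image_sub_of_le_deriv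
    (fun s hs ↦ (hφ s hs).continuousAt.continuousWithinAt)
    (fun s hs ↦ (hφ s (interior_subset hs)).differentiableAt.differentiableWithinAt)
    (fun s hs ↦ (hφ s (interior_subset hs)).deriv ▸ hc s (interior_subset hs))
    a (left_mem_Icc.mpr hab) b (right_mem_Icc.mpr hab) hab

theorem stmt_3_general (ε L : ℝ) (γ₀ T : ℝ → E3)
    (hε' : ε < 1 / 10000)
    (hL : 1 ≤ L)
    (hper : Function.Periodic γ₀ L)
    (hderiv : ∀ s, HasDerivAt γ₀ (T s) s)
    (hunit : ∀ s, ‖T s‖ = 1)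
    (hclose : ∀ s t : ℝ, |s - t| ≤ 1 → ‖T s - T t‖ ≤ ε) :
    100 ≤ L := by
  by_contra! hL100
  have hnear : ∀ s ∈ Icc 0 L, ‖T s - T 0‖ ≤ 1 / 100 := fun s hs ↦ by
    have hs100 : |s - 0| ≤ (100 : ℕ) * 1 := by
      rw [sub_zero, abs_of_nonneg hs.1]; push_cast; linarith [hs.2]
    have hchain := dist_le_nat_mul_of_dist_le (f := T)
      (by simpa only [dist_eq_norm] using hclose) 100 hs100
    rw [dist_eq_norm] at hchain
    push_cast at hchain
    linarith
  have hinner : ∀ s ∈ Icc 0 L, 1 / 2 ≤ ⟪T 0, T s⟫ := fun s hs ↦ by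
    have hlower := sq_norm_sub_norm_mul_norm_sub_le_real_inner (T 0) (T s)
    rw [hunit 0] at hlower
    linarith [hnear s hs]
  have hgrowth := mul_sub_le_real_inner_sub_of_le_real_inner (T 0) (by linarith)
    (fun s _ ↦ hderiv s) hinner
  rw [show γ₀ L = γ₀ 0 by simpa using hper 0, sub_self, inner_zero_right] at hgrowth
  linarith

/-- **Corollary 2.2.** Under the stated hypotheses on the closed arc-length parametrized `C¹`
curve `γ₀` (period `L ≥ 1`, `0 < ε < 1/10000`, tangents varying by at most `ε` on subsegments of
length `≤ 1`), the length of the curve satisfies `L ≥ 100`. -/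
theorem stmt_3 (ε L : ℝ) (γ₀ T : ℝ → E3)
    (hε : 0 < ε) (hε' : ε < 1 / 10000)
    (hL : 1 ≤ L)
    (hper : Function.Periodic γ₀ L)
    (hderiv : ∀ s, HasDerivAt γ₀ (T s) s)
    (hunit : ∀ s, ‖T s‖ = 1)
    (hclose : ∀ s t : ℝ, |s - t| ≤ 1 → ‖T s - T t‖ ≤ ε) :
    100 ≤ L :=
  stmt_3_general ε L γ₀ T hε' hL hper hderiv hunit hclose
end
end

section
/- Let a < b be real numbers with b − a ≥ 1 and |γ₀(a) − γ₀(b)| ≤ 10ε. Then b − a ≥ 50. (Equivalently: any sub-segment of the curve of length at least 1 whose two endpoints are at extrinsic distance at most 10ε has length at least 50.) -/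
/-! Suppose `b - a < 50`. Chaining the hypothesis on `γ₀'` over at most 50 unit steps keeps the
tangent within `50ε` of `γ₀'(a)` on all of `[a, b]`, so `γ₀` stays within `50ε (b - a)` of the
straight line through `γ₀(a)` with direction `γ₀'(a)`. Hence
`|γ₀(b) - γ₀(a)| ≥ (1 - 50ε)(b - a) ≥ 1 - 50ε > 10ε`, contradicting the hypothesis on the endpoints. -/

open Set

noncomputable section

theorem dist_le_nat_mul_of_dist_le_one {α : Type*} [PseudoMetricSpace α] {f : ℝ → α} {ε : ℝ}
    (hf : ∀ s t, dist s t ≤ 1 → dist (f s) (f t) ≤ ε) (n : ℕ) {s t : ℝ} (hst : dist s t ≤ n) :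
    dist (f s) (f t) ≤ n * ε := by
  induction n generalizing s with
  | zero =>
    obtain rfl : s = t := dist_le_zero.mp (by exact_mod_cast hst)
    simp
  | succ n ih =>
    -- split `[t, s]` at the point `u` with `|s - u| = |s - t| / (n + 1)`
    set u := t + n / (n + 1) * (s - t)
    have hn : (0 : ℝ) < n + 1 := by positivity
    have hsu : dist s u = dist s t / (n + 1) := by
      rw [Real.dist_eq, Real.dist_eq, eq_div_iff hn.ne', ← abs_of_pos hn, ← abs_mul]
      congr 1
      simp only [u]
      field_simp
      ring
    have hut : dist u t = n / (n + 1) * dist s t := by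
      rw [Real.dist_eq, Real.dist_eq, add_sub_cancel_left, abs_mul, abs_of_nonneg (by positivity)]
    have h1 : dist (f s) (f u) ≤ ε := hf s u <| by
      rw [hsu, div_le_one hn]; exact_mod_cast hst
    have h2 : dist (f u) (f t) ≤ n * ε := ih <| by
      rw [hut, div_mul_eq_mul_div, div_le_iff₀ hn]
      gcongr
      exact_mod_cast hst
    calc dist (f s) (f t) ≤ dist (f s) (f u) + dist (f u) (f t) := dist_triangle _ _ _
      _ ≤ (n + 1 : ℕ) * ε := by push_cast; linarith

theorem sub_mul_le_norm_image_sub_of_norm_deriv_sub_le {E : Type*} [NormedAddCommGroup E]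
    [NormedSpace ℝ E] {γ T : ℝ → E} {a b δ : ℝ} (hab : a ≤ b)
    (hγ : ∀ s ∈ Icc a b, HasDerivWithinAt γ (T s) (Icc a b) s)
    (hT : ∀ s ∈ Ico a b, ‖T s - T a‖ ≤ δ) :
    (‖T a‖ - δ) * (b - a) ≤ ‖γ b - γ a‖ := by
  -- `γ` drifts from the straight line `s ↦ s • T a` at speed at most `δ`
  have hdrift : ‖(γ b - b • T a) - (γ a - a • T a)‖ ≤ δ * (b - a) :=
    norm_image_sub_le_of_norm_deriv_le_segment' (f := fun s => γ s - s • T a)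
      (fun s hs => ((hγ s hs).sub ((hasDerivWithinAt_id s _).smul_const (T a))).congr_deriv
        (by rw [one_smul]))
      hT b (right_mem_Icc.mpr hab)
  have hline : ‖(b - a) • T a‖ = (b - a) * ‖T a‖ := by
    rw [norm_smul, Real.norm_of_nonneg (sub_nonneg.mpr hab)]
  have hsplit : (b - a) • T a = (γ b - γ a) - ((γ b - b • T a) - (γ a - a • T a)) := by
    rw [sub_smul]; abel
  have := norm_sub_le (γ b - γ a) ((γ b - b • T a) - (γ a - a • T a))
  rw [← hsplit, hline] at this
  linarith

theorem stmt_4_general (ε : ℝ) (γ₀ T : ℝ → E3)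
    (hε' : ε < 1 / 10000)
    (hderiv : ∀ s, HasDerivAt γ₀ (T s) s)
    (hunit : ∀ s, ‖T s‖ = 1)
    (hclose : ∀ s t : ℝ, |s - t| ≤ 1 → ‖T s - T t‖ ≤ ε)
    (a b : ℝ) (hlen : 1 ≤ b - a)
    (hends : ‖γ₀ a - γ₀ b‖ ≤ 10 * ε) :
    50 ≤ b - a := by
  by_contra! hshort
  have hclose_dist : ∀ s t, dist s t ≤ 1 → dist (T s) (T t) ≤ ε := fun s t hst => by
    rw [dist_eq_norm]
    exact hclose s t (by rwa [Real.dist_eq] at hst)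
  have hnear : ∀ s ∈ Ico a b, ‖T s - T a‖ ≤ 50 * ε := fun s hs => by
    rw [← dist_eq_norm]
    exact_mod_cast dist_le_nat_mul_of_dist_le_one hclose_dist 50 <| by
      rw [Real.dist_eq, abs_of_nonneg (by linarith [hs.1])]
      push_cast
      linarith [hs.2]
  have hspread := sub_mul_le_norm_image_sub_of_norm_deriv_sub_le (by linarith)
    (fun s _ => (hderiv s).hasDerivWithinAt) hnear
  rw [hunit, norm_sub_rev] at hspread
  nlinarith

/-- **Corollary 2.3.** Under the stated hypotheses on `γ₀`, any sub-segment `γ₀([a,b])` of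
length `b − a ≥ 1` whose endpoints satisfy `|γ₀(a) − γ₀(b)| ≤ 10ε` has length `b − a ≥ 50`. -/
theorem stmt_4 (ε L : ℝ) (γ₀ T : ℝ → E3)
    (hε : 0 < ε) (hε' : ε < 1 / 10000)
    (hL : 1 ≤ L)
    (hper : Function.Periodic γ₀ L)
    (hderiv : ∀ s, HasDerivAt γ₀ (T s) s)
    (hunit : ∀ s, ‖T s‖ = 1)
    (hclose : ∀ s t : ℝ, |s - t| ≤ 1 → ‖T s - T t‖ ≤ ε)
    (a b : ℝ) (hab : a < b) (hlen : 1 ≤ b - a)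
    (hends : ‖γ₀ a - γ₀ b‖ ≤ 10 * ε) :
    50 ≤ b - a :=
  stmt_4_general ε γ₀ T hε' hderiv hunit hclose a b hlen hends
end
end

section
/- The curve γ̃₀ : ℝ → ℝ³ defined by the smoothing formula is a C^∞ (smooth) curve. -/
open MeasureTheory Set

noncomputable section

/-- The smoothed curve `γ̃₀` of formula (2.1):  for `s` with `ks/L ∈ [j − 1/2, j + 1/2]`,
`j ∈ {1/2, 3/2, …}` (so `j = ⌊ks/L⌋ + 1/2`),
`γ̃₀(s) = γ₀(jL/k) + (ks/L − j)·χ(ks/L − j)·[γ₀((j+1)L/k) − γ₀(jL/k)]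
          + (j − ks/L)·(1 − χ(ks/L − j))·[γ₀((j−1)L/k) − γ₀(jL/k)]`. -/
def smoothed (γ : ℝ → E3) (χ : ℝ → ℝ) (L : ℝ) (k : ℕ) : ℝ → E3 := fun s =>
  let u : ℝ := (k : ℝ) * s / L
  let j : ℝ := (⌊u⌋ : ℝ) + 1 / 2
  γ (j * L / k)
    + ((u - j) * χ (u - j)) • (γ ((j + 1) * L / k) - γ (j * L / k))
    + ((j - u) * (1 - χ (u - j))) • (γ ((j - 1) * L / k) - γ (j * L / k))

lemma sm_aux (γ : ℝ → E3) (χ : ℝ → ℝ) (hχ : ContDiff ℝ (⊤ : ℕ∞) χ) (L : ℝ) (k : ℕ) (j : ℝ) :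
    ContDiff ℝ (⊤ : ℕ∞) (fun s : ℝ => γ (j * L / k)
      + (((k : ℝ) * s / L - j) * χ ((k : ℝ) * s / L - j)) • (γ ((j + 1) * L / k) - γ (j * L / k))
      + ((j - (k : ℝ) * s / L) * (1 - χ ((k : ℝ) * s / L - j))) •
          (γ ((j - 1) * L / k) - γ (j * L / k))) := by
  have hu : ContDiff ℝ (⊤ : ℕ∞) (fun s : ℝ => (k : ℝ) * s / L) :=
    (contDiff_const.mul contDiff_id).div_const _
  have h1 : ContDiff ℝ (⊤ : ℕ∞) (fun s : ℝ => (k : ℝ) * s / L - j) := hu.sub contDiff_const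
  exact (contDiff_const.add ((h1.mul (hχ.comp h1)).smul contDiff_const)).add
    (((contDiff_const.sub hu).mul (contDiff_const.sub (hχ.comp h1))).smul contDiff_const)

lemma sm_aux2 (γ : ℝ → E3) (L c : ℝ) (k : ℕ) (a b : E3) :
    ContDiff ℝ (⊤ : ℕ∞) (fun s : ℝ => a + ((k : ℝ) * s / L - c) • (b - a)) := by
  have hu : ContDiff ℝ (⊤ : ℕ∞) (fun s : ℝ => (k : ℝ) * s / L) :=
    (contDiff_const.mul contDiff_id).div_const _
  exact contDiff_const.add ((hu.sub contDiff_const).smul contDiff_const)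


/-- **Lemma 2.4.** The smoothed curve `γ̃₀` is a `C^∞` curve. -/
theorem stmt_5 (ε L : ℝ) (γ₀ T : ℝ → E3) (χ : ℝ → ℝ) (k : ℕ)
    (hε : 0 < ε) (hε' : ε < 1 / 10000)
    (hL : 100 ≤ L)
    (hper : Function.Periodic γ₀ L)
    (hderiv : ∀ s, HasDerivAt γ₀ (T s) s)
    (hunit : ∀ s, ‖T s‖ = 1)
    (hclose : ∀ s t : ℝ, |s - t| ≤ 1 → ‖T s - T t‖ ≤ ε)
    (hχ : ContDiff ℝ (⊤ : ℕ∞) χ)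
    (hχ0 : ∀ x : ℝ, x ≤ -(1 / 4) → χ x = 0)
    (hχ1 : ∀ x : ℝ, (1 / 4 : ℝ) ≤ x → χ x = 1)
    (hk1 : L ≤ (k : ℝ)) (hk2 : (k : ℝ) ≤ 2 * L)
    (hsub1 : (1 / 2 : ℝ) ≤ L / (k : ℝ)) (hsub2 : L / (k : ℝ) ≤ 1) :
    ContDiff ℝ (⊤ : ℕ∞) (smoothed γ₀ χ L k) := by
  rw [contDiff_iff_contDiffAt]
  intro s
  have hucont : Continuous fun s' : ℝ => (k : ℝ) * s' / L := by continuity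
  set u0 : ℝ := (k : ℝ) * s / L with hu0
  set n : ℤ := ⌊u0⌋ with hn
  by_cases hint : (n : ℝ) = u0
  · -- integer case: locally an affine interpolation
    apply (sm_aux2 γ₀ L ((n : ℝ) - 1/2) k (γ₀ (((n : ℝ) - 1/2) * L / k))
      (γ₀ (((n : ℝ) + 1/2) * L / k))).contDiffAt.congr_of_eventuallyEq
    have hmem : {s' : ℝ | (k : ℝ) * s' / L ∈ Ioo ((n : ℝ) - 1/4) ((n : ℝ) + 1/4)} ∈ nhds s := by
      apply (isOpen_Ioo.preimage hucont).mem_nhds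
      simp only [Set.mem_preimage, Set.mem_Ioo, ← hu0, ← hint]
      constructor <;> norm_num
    filter_upwards [hmem] with s' hs'
    obtain ⟨h1, h2⟩ := hs'
    set u' : ℝ := (k : ℝ) * s' / L with hu'
    rcases le_or_gt (n : ℝ) u' with hc | hc
    · have hfl : ⌊u'⌋ = n := by
        rw [Int.floor_eq_iff]; exact ⟨hc, by push_cast; linarith⟩
      simp only [smoothed, ← hu', hfl]
      have hχv : χ (u' - ((n : ℝ) + 1/2)) = 0 := hχ0 _ (by linarith)
      rw [hχv]
      have e1 : ((n : ℝ) + 1/2 - 1) * L / k = ((n : ℝ) - 1/2) * L / k := by ring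
      have e2 : ((n : ℝ) + 1/2 - u') = 1 - (u' - ((n : ℝ) - 1/2)) := by ring
      rw [e1, mul_zero, zero_smul, add_zero, sub_zero, mul_one, e2]
      module
    · have hfl : ⌊u'⌋ = n - 1 := by
        rw [Int.floor_eq_iff]; push_cast; constructor <;> linarith
      simp only [smoothed, ← hu', hfl]
      push_cast
      have hχv : χ (u' - ((n : ℝ) - 1 + 1/2)) = 1 := hχ1 _ (by linarith)
      rw [hχv]
      have e1 : ((n : ℝ) - 1 + 1/2 + 1) * L / k = ((n : ℝ) + 1/2) * L / k := by ring
      have e2 : ((n : ℝ) - 1 + 1/2) * L / k = ((n : ℝ) - 1/2) * L / k := by ring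
      have e3 : (u' - ((n : ℝ) - 1 + 1/2)) = u' - ((n : ℝ) - 1/2) := by ring
      rw [e1, e2, e3, sub_self, mul_zero, zero_smul, add_zero, mul_one]
  · -- non-integer case: floor locally constant
    apply (sm_aux γ₀ χ hχ L k ((n : ℝ) + 1/2)).contDiffAt.congr_of_eventuallyEq
    have hlt : (n : ℝ) < u0 := lt_of_le_of_ne (Int.floor_le u0) hint
    have hmem : {s' : ℝ | (k : ℝ) * s' / L ∈ Ioo (n : ℝ) ((n : ℝ) + 1)} ∈ nhds s := by
      apply (isOpen_Ioo.preimage hucont).mem_nhds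
      exact ⟨hlt, by show u0 < (n : ℝ) + 1; exact_mod_cast Int.lt_floor_add_one u0⟩
    filter_upwards [hmem] with s' hs'
    obtain ⟨h1, h2⟩ := hs'
    have hfl : ⌊(k : ℝ) * s' / L⌋ = n := by
      rw [Int.floor_eq_iff]; exact ⟨le_of_lt h1, by push_cast; linarith⟩
    simp only [smoothed, hfl]
end
end
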